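/- (Forward error bound, ill-conditioned capacitance case.) Let A be an invertible n×n real matrix, let U, V be n×k real matrices, set λ = ‖U‖·‖V‖ and B = A + UVᵀ, and assume B is invertible. Assume σ_min(A) ≤ 1 (equivalently ‖A⁻¹‖ ≥ 1), that the capacitance matrix I + Vᵀ A⁻¹ U is invertible with ‖(I + Vᵀ A⁻¹ U)⁻¹‖ ≤ α, and that α ≥ max(λ⁻¹, 1). Let ε ≤ 1 with ε < 1/(2λα), let X be an n×n matrix with ‖X − A⁻¹‖ ≤ ε; assume I + Vᵀ X U is invertible; and let Z be a k×k matrix with ‖Z − (I + Vᵀ X U)⁻¹‖ ≤ ε. Then ‖B⁻¹ − (X − X U Z Vᵀ X)‖ ≤ 16 ε λ² ‖A⁻¹‖² α². -/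

import Mathlib

open Matrix
open scoped Matrix.Norms.L2Operator

/-!
Mathlib's Woodbury identity gives `B⁻¹ = A⁻¹ - A⁻¹ U C⁻¹ Vᵀ A⁻¹` with `C = 1 + Vᵀ A⁻¹ U`.
The approximate capacitance matrix `C' = 1 + Vᵀ X U` is within `λε` of `C`, and as `2λεα ≤ 1`
the perturbation bound `C'⁻¹ = C⁻¹ + C'⁻¹ (C - C') C⁻¹` yields `‖C'⁻¹‖ ≤ 2α` and
`‖C'⁻¹ - C⁻¹‖ ≤ 2λεα²`. Telescoping, the error splits into four products, each carrying one
factor of size `ε`; with `ε ≤ 1 ≤ ‖A⁻¹‖`, `1 ≤ α` and `1 ≤ λα` each is at most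
`6 ε λ² ‖A⁻¹‖² α²`.
-/

namespace Matrix

lemma woodbury_approx_sub_eq {R : Type*} [CommRing R] {m n : Type*} [Fintype m] [Fintype n]
    (P X : Matrix n n R) (U : Matrix n m R) (Q Z : Matrix m m R) (W : Matrix m n R) :
    (P - P * U * Q * W * P) - (X - X * U * Z * W * X)
      = (P - X) + (X - P) * U * Z * (W * X) + P * U * (Z - Q) * (W * X)
        + P * U * Q * (W * (X - P)) := by
  simp only [Matrix.mul_sub, Matrix.sub_mul, Matrix.mul_assoc]
  abel

lemma add_mul_inv_eq_sub {R : Type*} [CommRing R] {m n : Type*} [Fintype m] [Fintype n]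
    [DecidableEq m] [DecidableEq n] (A : Matrix n n R) (U : Matrix n m R) (V : Matrix m n R)
    (hA : IsUnit A) (hcap : IsUnit (1 + V * A⁻¹ * U)) :
    (A + U * V)⁻¹ = A⁻¹ - A⁻¹ * U * (1 + V * A⁻¹ * U)⁻¹ * V * A⁻¹ := by
  simpa using add_mul_mul_inv_eq_sub A U 1 V hA isUnit_one (by simpa using hcap)

section L2OpNorm

variable {𝕜 : Type*} [RCLike 𝕜] {l m n : Type*} [Fintype l] [Fintype m] [Fintype n]
  [DecidableEq l] [DecidableEq n]

lemma l2_opNorm_mul_le_of_le {A : Matrix m n 𝕜} {B : Matrix n l 𝕜} {a b : ℝ}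
    (hA : ‖A‖ ≤ a) (hB : ‖B‖ ≤ b) : ‖A * B‖ ≤ a * b :=
  (l2_opNorm_mul A B).trans (mul_le_mul hA hB (norm_nonneg _) ((norm_nonneg _).trans hA))

lemma l2_opNorm_transpose [DecidableEq m] (A : Matrix m n ℝ) : ‖Aᵀ‖ = ‖A‖ := by
  rw [← conjTranspose_eq_transpose_of_trivial, l2_opNorm_conjTranspose]

lemma l2_opNorm_inv_le_two_mul [DecidableEq m] {C C' : Matrix m m 𝕜} (hC : IsUnit C)
    (hC' : IsUnit C') {α δ : ℝ} (hα : ‖C⁻¹‖ ≤ α) (hδ : ‖C' - C‖ ≤ δ) (hδα : 2 * δ * α ≤ 1) :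
    ‖C'⁻¹‖ ≤ 2 * α := by
  have : ‖C'⁻¹‖ ≤ α + ‖C'⁻¹‖ * δ * α :=
    calc ‖C'⁻¹‖ ≤ ‖C⁻¹‖ + ‖C'⁻¹ * (C - C') * C⁻¹‖ := by
          rw [← inv_sub_inv (iff_of_true hC' hC)]; exact norm_le_norm_add_norm_sub' _ _
      _ ≤ α + ‖C'⁻¹‖ * δ * α := by
        gcongr
        exact l2_opNorm_mul_le_of_le (l2_opNorm_mul_le_of_le le_rfl (norm_sub_rev C C' ▸ hδ)) hα
  have := mul_le_mul_of_nonneg_left hδα (norm_nonneg C'⁻¹)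
  linarith

lemma l2_opNorm_inv_sub_inv_le [DecidableEq m] {C C' : Matrix m m 𝕜} (hC : IsUnit C)
    (hC' : IsUnit C') {α δ : ℝ} (hα : ‖C⁻¹‖ ≤ α) (hδ : ‖C' - C‖ ≤ δ) (hδα : 2 * δ * α ≤ 1) :
    ‖C'⁻¹ - C⁻¹‖ ≤ 2 * δ * α ^ 2 :=
  calc ‖C'⁻¹ - C⁻¹‖ = ‖C'⁻¹ * (C - C') * C⁻¹‖ := by rw [inv_sub_inv (iff_of_true hC' hC)]
    _ ≤ 2 * α * δ * α := l2_opNorm_mul_le_of_le (l2_opNorm_mul_le_of_le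
        (l2_opNorm_inv_le_two_mul hC hC' hα hδ hδα) (norm_sub_rev C C' ▸ hδ)) hα
    _ = 2 * δ * α ^ 2 := by ring

lemma l2_opNorm_woodbury_approx_sub_le [DecidableEq m] {P X : Matrix n n 𝕜} {U : Matrix n m 𝕜}
    {Q Z : Matrix m m 𝕜} {W : Matrix m n 𝕜} {ε ζ η α : ℝ} (hX : ‖X - P‖ ≤ ε) (hZ : ‖Z‖ ≤ ζ)
    (hZQ : ‖Z - Q‖ ≤ η) (hQ : ‖Q‖ ≤ α) :
    ‖(P - P * U * Q * W * P) - (X - X * U * Z * W * X)‖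
      ≤ ε + ε * (‖U‖ * ‖W‖) * ζ * (‖P‖ + ε) + ‖P‖ * (‖U‖ * ‖W‖) * η * (‖P‖ + ε)
        + ‖P‖ * (‖U‖ * ‖W‖) * α * ε := by
  have hXn : ‖X‖ ≤ ‖P‖ + ε := (norm_le_norm_add_norm_sub' X P).trans (by gcongr)
  have hWX : ‖W * X‖ ≤ ‖W‖ * (‖P‖ + ε) := l2_opNorm_mul_le_of_le le_rfl hXn
  rw [woodbury_approx_sub_eq]
  calc _ ≤ ‖P - X‖ + ‖(X - P) * U * Z * (W * X)‖ + ‖P * U * (Z - Q) * (W * X)‖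
          + ‖P * U * Q * (W * (X - P))‖ := norm_add₄_le ..
    _ ≤ ε + ε * ‖U‖ * ζ * (‖W‖ * (‖P‖ + ε)) + ‖P‖ * ‖U‖ * η * (‖W‖ * (‖P‖ + ε))
          + ‖P‖ * ‖U‖ * α * (‖W‖ * ε) := by
      gcongr
      · exact norm_sub_rev P X ▸ hX
      · exact l2_opNorm_mul_le_of_le (l2_opNorm_mul_le_of_le
          (l2_opNorm_mul_le_of_le hX le_rfl) hZ) hWX
      · exact l2_opNorm_mul_le_of_le (l2_opNorm_mul_le_of_le
          (l2_opNorm_mul_le_of_le le_rfl le_rfl) hZQ) hWX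
      · exact l2_opNorm_mul_le_of_le (l2_opNorm_mul_le_of_le
          (l2_opNorm_mul_le_of_le le_rfl le_rfl) hQ) (l2_opNorm_mul_le_of_le le_rfl hX)
    _ = _ := by ring

end L2OpNorm

end Matrix

lemma approx_woodbury_error_budget {ε lam a α : ℝ} (hε0 : 0 ≤ ε) (hε1 : ε ≤ 1) (ha : 1 ≤ a)
    (hα : 1 ≤ α) (hlam : 0 ≤ lam) (hlamα : 1 ≤ lam * α) :
    ε + ε * lam * (2 * α + ε) * (a + ε) + a * lam * (ε + 2 * (lam * ε) * α ^ 2) * (a + ε)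
      + a * lam * α * ε ≤ 16 * ε * lam ^ 2 * a ^ 2 * α ^ 2 := by
  have ht : 1 ≤ lam * α * a := one_le_mul_of_one_le_of_one_le hlamα ha
  have hεt : ε * (lam * α * a) ≤ ε * (lam * α * a) ^ 2 := by
    gcongr; exact le_self_pow₀ ht two_ne_zero
  have h1 : ε ≤ ε * (lam * α * a) ^ 2 := le_mul_of_one_le_right hε0 (one_le_pow₀ ht)
  have h2 : ε * lam * (2 * α + ε) * (a + ε) ≤ 6 * (ε * (lam * α * a) ^ 2) :=
    calc ε * lam * (2 * α + ε) * (a + ε) ≤ ε * lam * (3 * α) * (2 * a) := by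
          gcongr <;> linarith
      _ = 6 * (ε * (lam * α * a)) := by ring
      _ ≤ 6 * (ε * (lam * α * a) ^ 2) := by gcongr
  have h3 : a * lam * (ε + 2 * (lam * ε) * α ^ 2) * (a + ε) ≤ 6 * (ε * (lam * α * a) ^ 2) := by
    have : ε ≤ lam * ε * α ^ 2 := by
      have : 1 ≤ lam * α ^ 2 := by nlinarith
      nlinarith
    calc a * lam * (ε + 2 * (lam * ε) * α ^ 2) * (a + ε)
        ≤ a * lam * (3 * (lam * ε * α ^ 2)) * (2 * a) := by gcongr <;> linarith
      _ = 6 * (ε * (lam * α * a) ^ 2) := by ring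
  have h4 : a * lam * α * ε ≤ ε * (lam * α * a) ^ 2 := by linarith
  linarith

theorem smw_forward_error_ill_conditioned_general {n k : ℕ}
    (A : Matrix (Fin n) (Fin n) ℝ) (hA : IsUnit A)
    (U V : Matrix (Fin n) (Fin k) ℝ) (lam : ℝ) (hlam : lam = ‖U‖ * ‖V‖)
    (B : Matrix (Fin n) (Fin n) ℝ) (hB : B = A + U * Vᵀ)
    (hσ : 1 ≤ ‖A⁻¹‖)
    (α : ℝ) (hcap : IsUnit ((1 : Matrix (Fin k) (Fin k) ℝ) + Vᵀ * A⁻¹ * U))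
    (hα : ‖((1 : Matrix (Fin k) (Fin k) ℝ) + Vᵀ * A⁻¹ * U)⁻¹‖ ≤ α)
    (hαbig : max lam⁻¹ 1 ≤ α)
    (ε : ℝ) (hε1 : ε ≤ 1) (hε : ε < 1 / (2 * lam * α))
    (X : Matrix (Fin n) (Fin n) ℝ) (hX : ‖X - A⁻¹‖ ≤ ε)
    (hcapX : IsUnit ((1 : Matrix (Fin k) (Fin k) ℝ) + Vᵀ * X * U))
    (Z : Matrix (Fin k) (Fin k) ℝ)
    (hZ : ‖Z - ((1 : Matrix (Fin k) (Fin k) ℝ) + Vᵀ * X * U)⁻¹‖ ≤ ε) :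
    ‖B⁻¹ - (X - X * U * Z * Vᵀ * X)‖ ≤ 16 * ε * lam ^ 2 * ‖A⁻¹‖ ^ 2 * α ^ 2 := by
  have hε0 : 0 ≤ ε := (norm_nonneg _).trans hX
  have hα1 : 1 ≤ α := (le_max_right _ _).trans hαbig
  have hlam0 : 0 < lam := by
    by_contra! h
    have : 2 * lam * α ≤ 0 := mul_nonpos_of_nonpos_of_nonneg (by linarith) (by linarith)
    linarith [one_div_nonpos.2 this]
  have hlamα : 1 ≤ lam * α := (inv_le_iff_one_le_mul₀' hlam0).1 ((le_max_left _ _).trans hαbig)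
  have hδα : 2 * (lam * ε) * α ≤ 1 := by
    have := (lt_div_iff₀ (by positivity)).1 hε
    linarith
  have hcapδ : ‖(1 + Vᵀ * X * U) - (1 + Vᵀ * A⁻¹ * U)‖ ≤ lam * ε := by
    rw [add_sub_add_left_eq_sub, ← Matrix.sub_mul, ← Matrix.mul_sub, hlam,
      ← l2_opNorm_transpose V]
    calc _ ≤ ‖Vᵀ‖ * ε * ‖U‖ := l2_opNorm_mul_le_of_le (l2_opNorm_mul_le_of_le le_rfl hX) le_rfl
      _ = _ := by ring
  have hZn : ‖Z‖ ≤ 2 * α + ε := (norm_le_norm_add_norm_sub' Z _).trans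
    (add_le_add (l2_opNorm_inv_le_two_mul hcap hcapX hα hcapδ hδα) hZ)
  have hZC : ‖Z - (1 + Vᵀ * A⁻¹ * U)⁻¹‖ ≤ ε + 2 * (lam * ε) * α ^ 2 :=
    (norm_sub_le_norm_sub_add_norm_sub _ _ _).trans
      (add_le_add hZ (l2_opNorm_inv_sub_inv_le hcap hcapX hα hcapδ hδα))
  rw [hB, add_mul_inv_eq_sub A U Vᵀ hA hcap]
  refine (l2_opNorm_woodbury_approx_sub_le hX hZn hZC hα).trans ?_
  rw [l2_opNorm_transpose, ← hlam]
  exact approx_woodbury_error_budget hε0 hε1 hσ hα1 hlam0.le hlamα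

/-- Forward error bound for approximate SMW, ill-conditioned capacitance case.
Here σ_min(A) ≤ 1 is expressed as 1 ≤ ‖A⁻¹‖. -/
theorem smw_forward_error_ill_conditioned {n k : ℕ}
    (A : Matrix (Fin n) (Fin n) ℝ) (hA : IsUnit A)
    (U V : Matrix (Fin n) (Fin k) ℝ) (lam : ℝ) (hlam : lam = ‖U‖ * ‖V‖)
    (B : Matrix (Fin n) (Fin n) ℝ) (hB : B = A + U * Vᵀ) (hBinv : IsUnit B)
    (hσ : 1 ≤ ‖A⁻¹‖)
    (α : ℝ) (hcap : IsUnit ((1 : Matrix (Fin k) (Fin k) ℝ) + Vᵀ * A⁻¹ * U))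
    (hα : ‖((1 : Matrix (Fin k) (Fin k) ℝ) + Vᵀ * A⁻¹ * U)⁻¹‖ ≤ α)
    (hαbig : max lam⁻¹ 1 ≤ α)
    (ε : ℝ) (hε1 : ε ≤ 1) (hε : ε < 1 / (2 * lam * α))
    (X : Matrix (Fin n) (Fin n) ℝ) (hX : ‖X - A⁻¹‖ ≤ ε)
    (hcapX : IsUnit ((1 : Matrix (Fin k) (Fin k) ℝ) + Vᵀ * X * U))
    (Z : Matrix (Fin k) (Fin k) ℝ)
    (hZ : ‖Z - ((1 : Matrix (Fin k) (Fin k) ℝ) + Vᵀ * X * U)⁻¹‖ ≤ ε) :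
    ‖B⁻¹ - (X - X * U * Z * Vᵀ * X)‖ ≤ 16 * ε * lam ^ 2 * ‖A⁻¹‖ ^ 2 * α ^ 2 :=
  smw_forward_error_ill_conditioned_general A hA U V lam hlam B hB hσ α hcap hα hαbig ε hε1 hε X hX
    hcapX Z hZ
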